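/- Let n ≥ 2 be an integer and define F₂ : (−∞, −1/(n−1)) → ℝ by F₂(t) = (1/(1+(n−1)²))·[(n−1)·ln(|1+(n−1)t|/√(1+t²)) + arctan t]. Then F₂ is strictly decreasing and is a bijection from (−∞, −1/(n−1)) onto (−∞, K₁), where K₁ = (1/(1+(n−1)²))·((n−1)·ln(n−1) − π/2); in particular lim_{t → −∞} F₂(t) = K₁ and lim_{t → (−1/(n−1))⁻} F₂(t) = −∞. Consequently the inverse w = F₂⁻¹ : (−∞, K₁) → (−∞, −1/(n−1)) is differentiable, satisfies w'(s) = (1 + w(s)²)·(1 + (n−1)·w(s)) for every s ∈ (−∞, K₁), and has lim_{s → −∞} w(s) = −1/(n−1) and lim_{s → K₁⁻} w(s) = −∞. -/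

import Mathlib

/-!
With `a = n - 1`, partial fractions give `F₂' t = 1 / ((1 + a t)(1 + t²))`, which is negative for
`t < -1/a`, so `F₂` is strictly decreasing there. Its limits at the two ends of the interval and the
intermediate value theorem make it a bijection onto `(-∞, K₁)`. The inverse `w` is monotone with
an interval as image, hence continuous, and the inverse function theorem gives
`w' = 1 / F₂'(w) = (1 + w²)(1 + a w)`.
-/

open Set Filter Real Topology

theorem StrictAntiOn.mapsTo_Iio_of_tendsto_atBot {α δ : Type*} [LinearOrder α] [NoMinOrder α]
    [LinearOrder δ] [TopologicalSpace δ] [ClosedIciTopology δ] {f : α → δ} {p : α} {K : δ}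
    (hf : StrictAntiOn f (Iio p)) (hK : Tendsto f atBot (𝓝 K)) : MapsTo f (Iio p) (Iio K) := by
  intro t ht
  have : Nonempty α := ⟨t⟩
  obtain ⟨t', ht't⟩ := exists_lt t
  have ht'p : t' ∈ Iio p := ht't.trans ht
  have hle : f t' ≤ K := by
    refine ge_of_tendsto hK ?_
    filter_upwards [eventually_le_atBot t'] with x hx
    exact hf.antitoneOn (lt_of_le_of_lt hx ht'p) ht'p hx
  exact (hf ht'p ht ht't).trans_le hle

theorem ContinuousOn.surjOn_Iio_of_tendsto {α δ : Type*} [ConditionallyCompleteLinearOrder α]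
    [TopologicalSpace α] [OrderTopology α] [DenselyOrdered α] [NoMinOrder α] [LinearOrder δ]
    [TopologicalSpace δ] [OrderTopology δ] [NoMinOrder δ] {f : α → δ} {p : α} {K : δ}
    (hf : ContinuousOn f (Iio p)) (hK : Tendsto f atBot (𝓝 K)) (hp : Tendsto f (𝓝[<] p) atBot) :
    SurjOn f (Iio p) (Iio K) := by
  intro y hy
  obtain ⟨t₁, ht₁y, ht₁p⟩ : ∃ t₁, f t₁ < y ∧ t₁ < p :=
    ((hp.eventually (eventually_lt_atBot y)).and self_mem_nhdsWithin).exists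
  obtain ⟨t₀, hyt₀, ht₀₁⟩ : ∃ t₀, y < f t₀ ∧ t₀ < t₁ :=
    ((hK.eventually (eventually_gt_nhds hy)).and (eventually_lt_atBot t₁)).exists
  have hsub : Icc t₀ t₁ ⊆ Iio p := fun x hx => hx.2.trans_lt ht₁p
  obtain ⟨t, ht, hty⟩ := intermediate_value_Icc' ht₀₁.le (hf.mono hsub) ⟨ht₁y.le, hyt₀.le⟩
  exact ⟨t, hsub ht, hty⟩

theorem StrictAntiOn.bijOn_Iio_of_tendsto {α δ : Type*} [ConditionallyCompleteLinearOrder α]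
    [TopologicalSpace α] [OrderTopology α] [DenselyOrdered α] [NoMinOrder α] [LinearOrder δ]
    [TopologicalSpace δ] [OrderTopology δ] [NoMinOrder δ] {f : α → δ} {p : α} {K : δ}
    (hf : StrictAntiOn f (Iio p)) (hcont : ContinuousOn f (Iio p)) (hK : Tendsto f atBot (𝓝 K))
    (hp : Tendsto f (𝓝[<] p) atBot) : BijOn f (Iio p) (Iio K) :=
  ⟨hf.mapsTo_Iio_of_tendsto_atBot hK, hf.injOn, hcont.surjOn_Iio_of_tendsto hK hp⟩

section Inverse

variable {f w : ℝ → ℝ} {p K : ℝ}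

theorem StrictAntiOn.apply_lt_iff_lt_of_invOn (hf : StrictAntiOn f (Iio p))
    (hw : MapsTo w (Iio K) (Iio p)) (hinv : InvOn w f (Iio p) (Iio K)) {s t : ℝ}
    (hs : s < K) (ht : t < p) : f t < s ↔ w s < t := by
  simpa only [hinv.2 hs] using hf.lt_iff_gt ht (hw hs)

theorem StrictAntiOn.lt_apply_iff_lt_of_invOn (hf : StrictAntiOn f (Iio p))
    (hw : MapsTo w (Iio K) (Iio p)) (hinv : InvOn w f (Iio p) (Iio K)) {s t : ℝ}
    (hs : s < K) (ht : t < p) : s < f t ↔ t < w s := by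
  simpa only [hinv.2 hs] using hf.lt_iff_gt (hw hs) ht

theorem StrictAntiOn.continuousAt_of_invOn (hf : StrictAntiOn f (Iio p))
    (hfK : MapsTo f (Iio p) (Iio K)) (hw : MapsTo w (Iio K) (Iio p))
    (hinv : InvOn w f (Iio p) (Iio K)) {s : ℝ} (hs : s < K) : ContinuousAt w s := by
  have hanti : AntitoneOn w (Iio K) := fun s₁ hs₁ s₂ hs₂ h => by
    refine (hf.le_iff_ge (hw hs₁) (hw hs₂)).1 ?_
    rwa [hinv.2 hs₁, hinv.2 hs₂]
  have himage : w '' Iio K ∈ 𝓝 (w s) :=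
    mem_of_superset (Iio_mem_nhds (hw hs)) fun t ht => ⟨f t, hfK ht, hinv.1 ht⟩
  exact continuousAt_of_monotoneOn_of_image_mem_nhds (β := ℝᵒᵈ) hanti.dual_right
    (Iio_mem_nhds hs) himage

theorem StrictAntiOn.tendsto_atBot_of_invOn (hf : StrictAntiOn f (Iio p))
    (hw : MapsTo w (Iio K) (Iio p)) (hinv : InvOn w f (Iio p) (Iio K)) :
    Tendsto w atBot (𝓝 p) := by
  refine tendsto_order.2 ⟨fun t ht => ?_, fun t ht => ?_⟩
  · filter_upwards [eventually_lt_atBot (min (f t) K)] with s hs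
    exact (hf.lt_apply_iff_lt_of_invOn hw hinv (hs.trans_le (min_le_right _ _)) ht).1
      (hs.trans_le (min_le_left _ _))
  · filter_upwards [eventually_lt_atBot K] with s hs
    exact (hw hs).trans ht

theorem StrictAntiOn.tendsto_nhdsLT_of_invOn (hf : StrictAntiOn f (Iio p))
    (hfK : MapsTo f (Iio p) (Iio K)) (hw : MapsTo w (Iio K) (Iio p))
    (hinv : InvOn w f (Iio p) (Iio K)) : Tendsto w (𝓝[<] K) atBot := by
  refine tendsto_atBot.2 fun M => ?_
  have ht : min M (p - 1) < p := (min_le_right _ _).trans_lt (sub_one_lt p)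
  filter_upwards [Ioo_mem_nhdsLT (hfK ht)] with s hs
  exact ((hf.apply_lt_iff_lt_of_invOn hw hinv hs.2 ht).1 hs.1).le.trans (min_le_left _ _)

end Inverse

noncomputable def firstIntegral (a t : ℝ) : ℝ :=
  1 / (1 + a ^ 2) * (a * log (|1 + a * t| / √(1 + t ^ 2)) + arctan t)

section FirstIntegral

variable {a : ℝ}

-- `Real.log` is even, so `log |1 + a t| = log (1 + a t)`; the latter is differentiable
-- wherever `1 + a t ≠ 0`.
theorem firstIntegral_eq {t : ℝ} (ht : 1 + a * t ≠ 0) :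
    firstIntegral a t =
      1 / (1 + a ^ 2) * (a * log (1 + a * t) - a / 2 * log (1 + t ^ 2) + arctan t) := by
  rw [firstIntegral, log_div (abs_ne_zero.2 ht) (by positivity), log_abs,
    log_sqrt (by positivity)]
  ring

-- Partial fractions: `(1 + a²) / ((1 + a t)(1 + t²)) = a² / (1 + a t) + (1 - a t) / (1 + t²)`.
theorem hasDerivAt_firstIntegral {t : ℝ} (ht : 1 + a * t ≠ 0) :
    HasDerivAt (firstIntegral a) (1 / ((1 + a * t) * (1 + t ^ 2))) t := by
  have hlin : HasDerivAt (fun x => 1 + a * x) a t := by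
    simpa using ((hasDerivAt_id t).const_mul a).const_add 1
  have hsq : HasDerivAt (fun x => 1 + x ^ 2) (2 * t) t := by
    simpa using (hasDerivAt_pow 2 t).const_add 1
  have hsum := ((((hlin.log ht).const_mul a).sub ((hsq.log (by positivity)).const_mul (a / 2))).add
    (hasDerivAt_arctan t)).const_mul (1 / (1 + a ^ 2))
  have hloc : ∀ᶠ x in 𝓝 t, 1 + a * x ≠ 0 :=
    (by fun_prop : Continuous fun x => 1 + a * x).continuousAt.eventually_ne ht
  refine (hsum.congr_of_eventuallyEq (hloc.mono fun x hx => firstIntegral_eq hx)).congr_deriv ?_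
  have : (0 : ℝ) < 1 + t ^ 2 := by positivity
  field_simp
  ring

theorem one_add_mul_neg_iff (ha : 0 < a) {t : ℝ} : 1 + a * t < 0 ↔ t < -1 / a := by
  rw [lt_div_iff₀ ha]
  constructor <;> intro h <;> linarith

theorem continuousOn_firstIntegral (ha : 0 < a) :
    ContinuousOn (firstIntegral a) (Iio (-1 / a)) := fun _ ht =>
  (hasDerivAt_firstIntegral ((one_add_mul_neg_iff ha).2 ht).ne).continuousAt.continuousWithinAt

theorem firstIntegral_strictAntiOn (ha : 0 < a) :
    StrictAntiOn (firstIntegral a) (Iio (-1 / a)) := by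
  refine strictAntiOn_of_deriv_neg (convex_Iio _) (continuousOn_firstIntegral ha) fun t ht => ?_
  rw [interior_Iio] at ht
  have hneg := (one_add_mul_neg_iff ha).2 ht
  rw [(hasDerivAt_firstIntegral hneg.ne).deriv]
  exact one_div_neg.2 (mul_neg_of_neg_of_pos hneg (by positivity))

theorem tendsto_abs_div_sqrt_atBot (ha : 0 < a) :
    Tendsto (fun t => |1 + a * t| / √(1 + t ^ 2)) atBot (𝓝 a) := by
  have hcont : Continuous fun u : ℝ => |a + u| / √(u ^ 2 + 1) :=
    (continuous_abs.comp (continuous_const.add continuous_id)).div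
      (continuous_sqrt.comp ((continuous_pow 2).add continuous_const)) fun u => by positivity
  have h := (hcont.tendsto 0).comp tendsto_inv_atBot_zero
  rw [add_zero, abs_of_pos ha, zero_pow two_ne_zero, zero_add, sqrt_one, div_one] at h
  refine h.congr' ?_
  filter_upwards [eventually_lt_atBot 0] with t ht
  have ht0 : t ≠ 0 := ht.ne
  have hlin : 1 + a * t = t * (a + t⁻¹) := by field_simp; ring
  have hsq : 1 + t ^ 2 = t ^ 2 * (t⁻¹ ^ 2 + 1) := by field_simp
  rw [Function.comp_apply, hlin, hsq, abs_mul, sqrt_mul (sq_nonneg t), sqrt_sq_eq_abs,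
    mul_div_mul_left _ _ (abs_ne_zero.2 ht0)]

theorem tendsto_firstIntegral_atBot (ha : 0 < a) :
    Tendsto (firstIntegral a) atBot (𝓝 (1 / (1 + a ^ 2) * (a * log a - π / 2))) := by
  have hlog := (continuousAt_log ha.ne').tendsto.comp (tendsto_abs_div_sqrt_atBot ha)
  have harctan := tendsto_nhds_of_tendsto_nhdsWithin tendsto_arctan_atBot
  rw [sub_eq_add_neg]
  exact ((hlog.const_mul a).add harctan).const_mul _

theorem tendsto_firstIntegral_nhdsLT (ha : 0 < a) :
    Tendsto (firstIntegral a) (𝓝[<] (-1 / a)) atBot := by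
  have hlin : Tendsto (fun t => 1 + a * t) (𝓝[<] (-1 / a)) (𝓝[≠] 0) := by
    refine tendsto_nhdsWithin_of_tendsto_nhds_of_eventually_within _ ?_ ?_
    · have hcont : Continuous fun t => 1 + a * t := by fun_prop
      have h := (hcont.tendsto (-1 / a)).mono_left (nhdsWithin_le_nhds (s := Iio (-1 / a)))
      rwa [mul_div_cancel₀ _ ha.ne', add_neg_cancel] at h
    · filter_upwards [self_mem_nhdsWithin] with t ht
      exact ((one_add_mul_neg_iff ha).2 ht).ne
  have hlog := tendsto_log_nhdsNE_zero.comp hlin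
  have hlog_sq : Continuous fun t : ℝ => log (1 + t ^ 2) :=
    (by fun_prop : Continuous fun t : ℝ => 1 + t ^ 2).log fun t => by positivity
  have hrest : Continuous fun t => 1 / (1 + a ^ 2) * (-(a / 2) * log (1 + t ^ 2) + arctan t) := by
    fun_prop
  refine (((hrest.tendsto _).mono_left nhdsWithin_le_nhds).add_atBot
    ((hlog.const_mul_atBot ha).const_mul_atBot (r := 1 / (1 + a ^ 2)) (by positivity))).congr' ?_
  filter_upwards [self_mem_nhdsWithin] with t ht
  rw [Function.comp_apply, firstIntegral_eq ((one_add_mul_neg_iff ha).2 ht).ne]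
  ring

theorem hasDerivAt_of_invOn_firstIntegral (ha : 0 < a) {w : ℝ → ℝ} {K s : ℝ}
    (hfK : MapsTo (firstIntegral a) (Iio (-1 / a)) (Iio K)) (hw : MapsTo w (Iio K) (Iio (-1 / a)))
    (hinv : InvOn w (firstIntegral a) (Iio (-1 / a)) (Iio K)) (hs : s < K) :
    HasDerivAt w ((1 + w s ^ 2) * (1 + a * w s)) s := by
  have hneg := (one_add_mul_neg_iff ha).2 (hw hs)
  have hcont := (firstIntegral_strictAntiOn ha).continuousAt_of_invOn hfK hw hinv hs
  have hleft : ∀ᶠ x in 𝓝 s, firstIntegral a (w x) = x :=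
    eventually_of_mem (Iio_mem_nhds hs) fun x hx => hinv.2 hx
  have hderiv_ne : 1 / ((1 + a * w s) * (1 + w s ^ 2)) ≠ 0 :=
    one_div_ne_zero (mul_ne_zero hneg.ne (by positivity))
  refine ((hasDerivAt_firstIntegral hneg.ne).of_local_left_inverse hcont hderiv_ne
    hleft).congr_deriv ?_
  rw [one_div, inv_inv, mul_comm]

end FirstIntegral

/-- The first integral `F₂` of `w' = (1+w²)(1+(n−1)w)` on
`(−∞, −1/(n−1))` is a strictly decreasing bijection onto `(−∞, K₁)` with the stated
limits, and its inverse `w = F₂⁻¹` solves the ODE with `w → −1/(n−1)` at `−∞` and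
`w → −∞` at `K₁⁻`. -/
theorem first_integral_F2_properties_and_inverse
    (n : ℕ) (hn : 2 ≤ n) (F₂ : ℝ → ℝ) (K₁ : ℝ)
    (hF : ∀ t : ℝ, F₂ t = (1 / (1 + ((n : ℝ) - 1) ^ 2)) *
      (((n : ℝ) - 1) * Real.log (|1 + ((n : ℝ) - 1) * t| / Real.sqrt (1 + t ^ 2))
        + Real.arctan t))
    (hK : K₁ = (1 / (1 + ((n : ℝ) - 1) ^ 2)) *
      (((n : ℝ) - 1) * Real.log ((n : ℝ) - 1) - Real.pi / 2)) :
    StrictAntiOn F₂ (Set.Iio (-1 / ((n : ℝ) - 1))) ∧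
    Set.BijOn F₂ (Set.Iio (-1 / ((n : ℝ) - 1))) (Set.Iio K₁) ∧
    Filter.Tendsto F₂ Filter.atBot (nhds K₁) ∧
    Filter.Tendsto F₂ (nhdsWithin (-1 / ((n : ℝ) - 1)) (Set.Iio (-1 / ((n : ℝ) - 1))))
      Filter.atBot ∧
    ∀ w : ℝ → ℝ,
      Set.MapsTo w (Set.Iio K₁) (Set.Iio (-1 / ((n : ℝ) - 1))) →
      Set.InvOn w F₂ (Set.Iio (-1 / ((n : ℝ) - 1))) (Set.Iio K₁) →
      (∀ s ∈ Set.Iio K₁,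
        HasDerivAt w ((1 + w s ^ 2) * (1 + ((n : ℝ) - 1) * w s)) s) ∧
      Filter.Tendsto w Filter.atBot (nhds (-1 / ((n : ℝ) - 1))) ∧
      Filter.Tendsto w (nhdsWithin K₁ (Set.Iio K₁)) Filter.atBot := by
  have ha : (0 : ℝ) < n - 1 := by
    have : (2 : ℝ) ≤ n := by exact_mod_cast hn
    linarith
  obtain rfl : F₂ = firstIntegral ((n : ℝ) - 1) := funext hF
  subst hK
  have hanti := firstIntegral_strictAntiOn ha
  have hbij := hanti.bijOn_Iio_of_tendsto (continuousOn_firstIntegral ha)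
    (tendsto_firstIntegral_atBot ha) (tendsto_firstIntegral_nhdsLT ha)
  refine ⟨hanti, hbij, tendsto_firstIntegral_atBot ha, tendsto_firstIntegral_nhdsLT ha,
    fun w hw hinv => ⟨fun s hs => hasDerivAt_of_invOn_firstIntegral ha hbij.mapsTo hw hinv hs,
      hanti.tendsto_atBot_of_invOn hw hinv, hanti.tendsto_nhdsLT_of_invOn hbij.mapsTo hw hinv⟩⟩
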